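/- Let d ≥ 1 and let P_n denote the n-step transition probabilities of the simple random walk on Z^d with holding, and let φ_n be the Gaussian kernel. Then for every β with 0 < β < 1/√d there exist constants L = L(β) > 0 and C = C(β) > 0 such that for all integers n ≥ 2 and all x ∈ Z^d with |x| ≥ √(L n log n), one has P_n(x) ≤ C φ_n(βx)/√n. -/

import Mathlib

open scoped BigOperators

/-- Euclidean norm of a lattice point in `ℤ^d`. -/
noncomputable def latNorm {d : ℕ} (x : Fin d → ℤ) : ℝ :=
  Real.sqrt (∑ i, ((x i : ℝ)) ^ 2)

/-- Coercion of a lattice point to a real vector. -/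
def toRealVec {d : ℕ} (x : Fin d → ℤ) : Fin d → ℝ := fun i => (x i : ℝ)

/-- One-step transition kernel of the simple random walk on `ℤ^d` with holding. -/
noncomputable def srwStep (d : ℕ) (x : Fin d → ℤ) : ℝ :=
  if latNorm x ≤ 1 then 1 / (2 * (d : ℝ) + 1) else 0

/-- `n`-step transition probabilities of the simple random walk on `ℤ^d` with holding,
defined by convolution powers with `P₀ = δ₀`. -/
noncomputable def srwP (d : ℕ) : ℕ → (Fin d → ℤ) → ℝ
  | 0 => fun x => if x = 0 then 1 else 0
  | n + 1 => fun x => ∑' y : Fin d → ℤ, srwP d n y * srwStep d (x - y)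

/-- The Gaussian (heat) kernel on `ℝ^d`: `φ_t(x) = (2πt)^{-d/2} exp(-|x|²/(2t))`. -/
noncomputable def gauss (d : ℕ) (t : ℝ) (x : Fin d → ℝ) : ℝ :=
  (2 * Real.pi * t) ^ (-(d : ℝ) / 2) * Real.exp (-(∑ i, (x i) ^ 2) / (2 * t))

/-!
Chernoff bound. For `|θ i| ≤ 1` the one-step moment generating function
`∑ z, P₁(z) exp (θ ⬝ᵥ z)` is at most `exp (4/9 |θ|²)`, because `cosh t ≤ 1 + 2t²/3` there and
`2d + 1 ≥ 3`; induction on `n` then gives `Pₙ(x) ≤ exp (4/9 n |θ|² - θ ⬝ᵥ x)`. The walk never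
leaves the ball of radius `n`, and inside it the tilt `θ = x / n` is admissible and yields
`Pₙ(x) ≤ exp (-5|x|² / (9n))`. As `β² ≤ 1`, this beats `exp (-β²|x|² / (2n))` by a factor
`exp (-|x|² / (18n))`, which is at most `n^{-(d+1)/2}` once `|x|² ≥ 9 (d+1) n log n`.
-/

open Finset Real

variable {d : ℕ}

lemma toRealVec_sub (x y : Fin d → ℤ) : toRealVec (x - y) = toRealVec x - toRealVec y := by
  ext i
  simp [toRealVec]

lemma toRealVec_zero : toRealVec (0 : Fin d → ℤ) = 0 := by
  ext
  simp [toRealVec]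

lemma toRealVec_single (i : Fin d) (a : ℤ) : toRealVec (Pi.single i a) = Pi.single i (a : ℝ) := by
  ext j
  by_cases h : j = i <;> simp [toRealVec, h]

lemma latNorm_eq_norm (x : Fin d → ℤ) :
    latNorm x = ‖(WithLp.toLp 2 (toRealVec x) : EuclideanSpace ℝ (Fin d))‖ := by
  simp [latNorm, EuclideanSpace.norm_eq, toRealVec]

lemma latNorm_sq (x : Fin d → ℤ) : latNorm x ^ 2 = ∑ i, toRealVec x i ^ 2 :=
  sq_sqrt (by positivity)

lemma sum_sq_smul (c : ℝ) (v : Fin d → ℝ) : ∑ i, (c • v) i ^ 2 = c ^ 2 * ∑ i, v i ^ 2 := by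
  simp [mul_pow, mul_sum]

lemma latNorm_le_add_latNorm_sub (x y : Fin d → ℤ) : latNorm x ≤ latNorm y + latNorm (x - y) := by
  simp only [latNorm_eq_norm, toRealVec_sub, WithLp.toLp_sub]
  exact norm_le_norm_add_norm_sub' _ _

lemma abs_le_latNorm (x : Fin d → ℤ) (i : Fin d) : |(x i : ℝ)| ≤ latNorm x := by
  simpa [latNorm_eq_norm, toRealVec] using
    PiLp.norm_apply_le (WithLp.toLp 2 (toRealVec x) : EuclideanSpace ℝ (Fin d)) i

lemma srwStep_nonneg (z : Fin d → ℤ) : 0 ≤ srwStep d z := by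
  unfold srwStep
  split_ifs <;> positivity

lemma srwStep_le (z : Fin d → ℤ) : srwStep d z ≤ 1 / (2 * d + 1) := by
  unfold srwStep
  split_ifs
  · exact le_rfl
  · positivity

def srwSupport (d : ℕ) : Finset (Fin d → ℤ) :=
  insert 0 ((univ ×ˢ {1, -1}).image fun p : Fin d × ℤ => Pi.single p.1 p.2)

lemma mem_srwSupport_of_latNorm_le_one {z : Fin d → ℤ} (hz : latNorm z ≤ 1) :
    z ∈ srwSupport d := by
  have hsum : ∑ i, z i ^ 2 ≤ 1 := by
    have : ∑ i, (z i : ℝ) ^ 2 ≤ 1 := sqrt_le_one.1 hz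
    exact_mod_cast this
  by_cases h0 : z = 0
  · simp [srwSupport, h0]
  obtain ⟨i, hi⟩ : ∃ i, z i ≠ 0 := by simpa [funext_iff] using h0
  have hzi : z i = 1 ∨ z i = -1 := by
    have := abs_le.1 ((sq_le_one_iff_abs_le_one _).1
      ((single_le_sum (fun j _ => sq_nonneg (z j)) (mem_univ i)).trans hsum))
    omega
  have hzj : ∀ j ≠ i, z j = 0 := by
    intro j hj
    have := (add_le_sum (fun k _ => sq_nonneg (z k)) (mem_univ i) (mem_univ j) hj.symm).trans hsum
    nlinarith [sq_nonneg (z j), pow_pos (abs_pos.2 hi) 2, sq_abs (z i)]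
  have hz : z = Pi.single i (z i) := by
    ext j
    by_cases hj : j = i
    · subst hj; simp
    · simp [hj, hzj j hj]
  rw [hz]
  simp only [srwSupport, mem_insert, mem_image, mem_product, mem_univ, true_and]
  exact Or.inr ⟨(i, z i), by simpa using hzi, rfl⟩

lemma srwStep_eq_zero_of_notMem {z : Fin d → ℤ} (hz : z ∉ srwSupport d) : srwStep d z = 0 :=
  if_neg fun h => hz (mem_srwSupport_of_latNorm_le_one h)

lemma tsum_mul_srwStep_sub (g : (Fin d → ℤ) → ℝ) (x : Fin d → ℤ) :
    ∑' y, g y * srwStep d (x - y) = ∑ z ∈ srwSupport d, g (x - z) * srwStep d z := by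
  rw [← (Equiv.subLeft x).tsum_eq]
  simp only [Equiv.subLeft_apply, sub_sub_cancel]
  exact tsum_eq_sum fun z hz => by rw [srwStep_eq_zero_of_notMem hz, mul_zero]

lemma srwP_succ (n : ℕ) (x : Fin d → ℤ) :
    srwP d (n + 1) x = ∑ z ∈ srwSupport d, srwP d n (x - z) * srwStep d z :=
  tsum_mul_srwStep_sub _ x

lemma srwP_eq_zero_of_lt_latNorm {n : ℕ} {x : Fin d → ℤ} (hx : (n : ℝ) < latNorm x) :
    srwP d n x = 0 := by
  induction n generalizing x with
  | zero =>
    have : x ≠ 0 := by rintro rfl; simp [latNorm] at hx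
    simp [srwP, this]
  | succ n ih =>
    rw [srwP_succ]
    refine sum_eq_zero fun z _ => ?_
    by_cases hz : latNorm z ≤ 1
    · have := latNorm_le_add_latNorm_sub x (x - z)
      rw [sub_sub_cancel] at this
      push_cast at hx
      rw [ih (by linarith), zero_mul]
    · simp [srwStep, hz]

lemma cosh_le_one_add_sq {t : ℝ} (ht : |t| ≤ 1) : cosh t ≤ 1 + 2 / 3 * t ^ 2 := by
  have hpos := abs_sub_le_iff.1 (Real.exp_bound ht (n := 4) (by norm_num))
  have hneg := abs_sub_le_iff.1 (Real.exp_bound (x := -t) (by rwa [abs_neg]) (n := 4) (by norm_num))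
  simp only [sum_range_succ, sum_range_zero, abs_neg] at hpos hneg
  norm_num [Nat.factorial] at hpos hneg
  have ht4 : |t| ^ 4 ≤ t ^ 2 := by
    rw [← sq_abs t, show |t| ^ 4 = (|t| ^ 2) ^ 2 by ring]
    exact pow_le_of_le_one (by positivity) (pow_le_one₀ (abs_nonneg t) ht) (by norm_num)
  rw [cosh_eq]
  linarith [hpos.1, hneg.1]

lemma sum_srwStep_mul_le {f : (Fin d → ℤ) → ℝ} (hf : 0 ≤ f) :
    ∑ z ∈ srwSupport d, srwStep d z * f z
      ≤ (f 0 + ∑ i, (f (Pi.single i 1) + f (Pi.single i (-1)))) / (2 * d + 1) := by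
  have h0 : (0 : Fin d → ℤ) ∉ (univ ×ˢ {1, -1}).image fun p : Fin d × ℤ => Pi.single p.1 p.2 := by
    simp [Pi.single_eq_zero_iff]
  calc ∑ z ∈ srwSupport d, srwStep d z * f z
      ≤ ∑ z ∈ srwSupport d, f z / (2 * d + 1) := by
        refine sum_le_sum fun z _ => ?_
        rw [div_eq_mul_one_div, mul_comm (f z)]
        exact mul_le_mul_of_nonneg_right (srwStep_le z) (hf z)
    _ ≤ (f 0 + ∑ p ∈ univ ×ˢ ({1, -1} : Finset ℤ), f (Pi.single p.1 p.2)) / (2 * d + 1) := by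
        rw [← sum_div, srwSupport, sum_insert h0]
        gcongr
        exact sum_image_le_of_nonneg fun z _ => hf z
    _ = _ := by
        rw [sum_product]
        simp [sum_pair (show (1 : ℤ) ≠ -1 by norm_num)]

lemma sum_srwStep_mul_exp_le (hd : 1 ≤ d) {θ : Fin d → ℝ} (hθ : ∀ i, |θ i| ≤ 1) :
    ∑ z ∈ srwSupport d, srwStep d z * exp (θ ⬝ᵥ toRealVec z) ≤ exp (4 / 9 * ∑ i, θ i ^ 2) := by
  have hd' : (3 : ℝ) ≤ 2 * d + 1 := by
    have : (1 : ℝ) ≤ d := by exact_mod_cast hd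
    linarith
  have hcosh : ∑ i, (exp (θ i) + exp (-θ i)) ≤ 2 * d + 4 / 3 * ∑ i, θ i ^ 2 := by
    calc ∑ i, (exp (θ i) + exp (-θ i)) ≤ ∑ i, (2 + 4 / 3 * θ i ^ 2) := by
          refine sum_le_sum fun i _ => ?_
          linarith [cosh_le_one_add_sq (hθ i), cosh_eq (θ i)]
      _ = 2 * d + 4 / 3 * ∑ i, θ i ^ 2 := by
          simp only [sum_add_distrib, ← mul_sum, sum_const, card_univ, Fintype.card_fin]
          ring
  calc ∑ z ∈ srwSupport d, srwStep d z * exp (θ ⬝ᵥ toRealVec z)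
      ≤ (1 + ∑ i, (exp (θ i) + exp (-θ i))) / (2 * d + 1) := by
        refine (sum_srwStep_mul_le fun z => (exp_pos _).le).trans_eq ?_
        simp [toRealVec_zero, toRealVec_single, dotProduct_single]
    _ ≤ 1 + 4 / 9 * ∑ i, θ i ^ 2 := by
        rw [div_le_iff₀ (by linarith)]
        nlinarith [sum_nonneg fun i (_ : i ∈ univ) => sq_nonneg (θ i)]
    _ ≤ exp (4 / 9 * ∑ i, θ i ^ 2) := by linarith [add_one_le_exp (4 / 9 * ∑ i, θ i ^ 2)]

lemma srwP_le_exp_of_sum_srwStep_mul_exp_le {θ : Fin d → ℝ} {K : ℝ}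
    (hK : ∑ z ∈ srwSupport d, srwStep d z * exp (θ ⬝ᵥ toRealVec z) ≤ exp K) (n : ℕ)
    (x : Fin d → ℤ) : srwP d n x ≤ exp (n * K - θ ⬝ᵥ toRealVec x) := by
  induction n generalizing x with
  | zero => by_cases hx : x = 0 <;> simp [srwP, hx, toRealVec_zero, (exp_pos _).le]
  | succ n ih =>
    calc srwP d (n + 1) x = ∑ z ∈ srwSupport d, srwP d n (x - z) * srwStep d z := srwP_succ n x
      _ ≤ ∑ z ∈ srwSupport d, exp (n * K - θ ⬝ᵥ toRealVec (x - z)) * srwStep d z :=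
          sum_le_sum fun z _ => mul_le_mul_of_nonneg_right (ih _) (srwStep_nonneg z)
      _ = exp (n * K - θ ⬝ᵥ toRealVec x) *
            ∑ z ∈ srwSupport d, srwStep d z * exp (θ ⬝ᵥ toRealVec z) := by
          rw [mul_sum]
          refine sum_congr rfl fun z _ => ?_
          rw [toRealVec_sub, dotProduct_sub, mul_left_comm, ← exp_add]
          ring_nf
      _ ≤ exp (n * K - θ ⬝ᵥ toRealVec x) * exp K := by gcongr
      _ = exp ((n + 1 : ℕ) * K - θ ⬝ᵥ toRealVec x) := by
          rw [← exp_add]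
          push_cast
          ring_nf

lemma srwP_le_exp_neg_latNorm_sq (hd : 1 ≤ d) (n : ℕ) (x : Fin d → ℤ) :
    srwP d n x ≤ exp (-(5 / 9) * (latNorm x ^ 2 / n)) := by
  by_cases hfar : (n : ℝ) < latNorm x
  · rw [srwP_eq_zero_of_lt_latNorm hfar]
    exact (exp_pos _).le
  set θ : Fin d → ℝ := (n : ℝ)⁻¹ • toRealVec x
  have hθ : ∀ i, |θ i| ≤ 1 := fun i => by
    simpa [θ, toRealVec, abs_mul] using
      inv_mul_le_one_of_le₀ ((abs_le_latNorm x i).trans (not_lt.1 hfar)) n.cast_nonneg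
  refine (srwP_le_exp_of_sum_srwStep_mul_exp_le (sum_srwStep_mul_exp_le hd hθ) n x).trans_eq ?_
  have hdot : toRealVec x ⬝ᵥ toRealVec x = latNorm x ^ 2 := by
    rw [latNorm_sq]
    simp only [dotProduct, sq]
  rw [sum_sq_smul, ← latNorm_sq, smul_dotProduct, hdot, smul_eq_mul]
  rcases eq_or_ne (n : ℝ) 0 with hn | hn
  · simp [hn]
  · congr 1
    field_simp
    ring

lemma gauss_mul_div_sqrt {t : ℝ} (ht : 0 < t) (v : Fin d → ℝ) :
    (2 * π) ^ ((d : ℝ) / 2) * gauss d t v / √t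
      = exp (-((d + 1) / 2) * log t - (∑ i, v i ^ 2) / (2 * t)) := by
  rw [gauss, sqrt_eq_rpow, rpow_def_of_pos (by positivity), rpow_def_of_pos (by positivity),
    rpow_def_of_pos ht, log_mul (by positivity) ht.ne', ← exp_add, ← exp_add, ← exp_sub]
  congr 1
  ring

/-- large deviation region bound `P_n(x) ≤ C φ_n(βx)/√n`
for `|x| ≥ √(L n log n)`. -/
theorem srwP_le_gauss_far (d : ℕ) (hd : 1 ≤ d) (β : ℝ)
    (hβ0 : 0 < β) (hβ : β < 1 / Real.sqrt d) :
    ∃ L > (0 : ℝ), ∃ C > (0 : ℝ), ∀ n : ℕ, 2 ≤ n → ∀ x : Fin d → ℤ,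
      Real.sqrt (L * n * Real.log n) ≤ latNorm x →
      srwP d n x ≤ C * gauss d n (β • toRealVec x) / Real.sqrt n := by
  have hβ1 : β ^ 2 ≤ 1 := by
    refine pow_le_one₀ hβ0.le (hβ.le.trans ?_)
    rw [div_le_one (by positivity), one_le_sqrt]
    exact_mod_cast hd
  refine ⟨9 * (d + 1), by positivity, (2 * π) ^ ((d : ℝ) / 2), by positivity, fun n hn x hx => ?_⟩
  have hn0 : (0 : ℝ) < n := by positivity
  have hlog0 : 0 ≤ log n := log_nonneg (by exact_mod_cast (by omega : 1 ≤ n))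
  have hq : 9 * (d + 1) * log n ≤ latNorm x ^ 2 / n := by
    rw [le_div_iff₀ hn0]
    linarith [(sqrt_le_left (sqrt_nonneg _ |>.trans hx)).1 hx]
  rw [gauss_mul_div_sqrt hn0, sum_sq_smul, ← latNorm_sq]
  refine (srwP_le_exp_neg_latNorm_sq hd n x).trans (exp_le_exp.2 ?_)
  rw [show β ^ 2 * latNorm x ^ 2 / (2 * n) = β ^ 2 / 2 * (latNorm x ^ 2 / n) by ring]
  nlinarith [mul_nonneg (sub_nonneg.2 hβ1) ((mul_nonneg (by positivity) hlog0).trans hq)]
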